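/- arXiv:2303.14555 — 13 statements merged into one kernel-verified Lean document; each statement's English description precedes it below -/
import Mathlib

section
/- For unit quaternions q and q', one has q * 𝕚 * conj q = q' * 𝕚 * conj q' if and only if there exists θ ∈ ℝ such that q' = q * (cos θ + (sin θ) • 𝕚). In other words, the fibers of the Hopf map are exactly the orbits of right multiplication by the circle subgroup {cos θ + (sin θ) • 𝕚 : θ ∈ ℝ} of unit quaternions. -/
open Quaternion

noncomputable section

/-- The imaginary unit `𝕚` of the quaternions. -/
def qi : ℍ := ⟨0, 1, 0, 0⟩

lemma exists_cos_sin {a b : ℝ} (h : a ^ 2 + b ^ 2 = 1) :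
    ∃ θ : ℝ, Real.cos θ = a ∧ Real.sin θ = b := by
  have hz : (⟨a, b⟩ : ℂ) ≠ 0 := by
    intro hz
    rw [Complex.ext_iff] at hz
    simp at hz
    rw [hz.1, hz.2] at h; norm_num at h
  have habs : ‖(⟨a, b⟩ : ℂ)‖ = 1 := by
    rw [Complex.norm_def, Complex.normSq_mk]
    rw [show a * a + b * b = 1 by nlinarith]
    exact Real.sqrt_one
  refine ⟨Complex.arg ⟨a, b⟩, ?_, ?_⟩
  · rw [Complex.cos_arg hz, habs]; simp
  · rw [Complex.sin_arg, habs]; simp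

lemma commute_qi_iff (u : ℍ) : u * qi = qi * u ↔ u.imJ = 0 ∧ u.imK = 0 := by
  constructor
  · intro h
    rw [Quaternion.ext_iff] at h
    simp [Quaternion.re_mul, Quaternion.imI_mul, Quaternion.imJ_mul,
      Quaternion.imK_mul] at h
    simp [qi] at h
    constructor <;> linarith [h.1, h.2]
  · intro ⟨h1, h2⟩
    ext <;> simp [Quaternion.re_mul, Quaternion.imI_mul, Quaternion.imJ_mul,
      Quaternion.imK_mul, h1, h2] <;> simp [qi, h1, h2]

theorem stmt_1 (q q' : ℍ) (hq : ‖q‖ = 1) (hq' : ‖q'‖ = 1) :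
    q * qi * star q = q' * qi * star q' ↔
      ∃ θ : ℝ, q' = q * (((Real.cos θ : ℝ) : ℍ) + (Real.sin θ) • qi) := by
  have hq1 : star q * q = 1 := by
    rw [Quaternion.star_mul_self, Quaternion.normSq_eq_norm_mul_self, hq]
    norm_num
  have hq2 : q * star q = 1 := by
    rw [Quaternion.self_mul_star, Quaternion.normSq_eq_norm_mul_self, hq]
    norm_num
  have hq'1 : star q' * q' = 1 := by
    rw [Quaternion.star_mul_self, Quaternion.normSq_eq_norm_mul_self, hq']
    norm_num
  have hq'2 : q' * star q' = 1 := by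
    rw [Quaternion.self_mul_star, Quaternion.normSq_eq_norm_mul_self, hq']
    norm_num
  constructor
  · intro h
    set u := star q * q' with hu
    have hcomm : u * qi = qi * u := by
      have h2 := congrArg (fun x => star q * x * q') h
      rw [show star q * (q * qi * star q) * q' = (star q * q) * (qi * (star q * q')) by
            noncomm_ring,
          show star q * (q' * qi * star q') * q' = (star q * q') * qi * (star q' * q') by
            noncomm_ring,
          hq1, hq'1, one_mul, mul_one] at h2
      exact h2.symm
    obtain ⟨hJ, hK⟩ := (commute_qi_iff u).mp hcomm
    have hnu : ‖u‖ = 1 := by rw [hu, norm_mul]; simp [hq, hq']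
    have hsq : u.re ^ 2 + u.imI ^ 2 = 1 := by
      have := Quaternion.normSq_eq_norm_mul_self u
      rw [hnu] at this
      have hdef : normSq u = u.re ^ 2 + u.imI ^ 2 + u.imJ ^ 2 + u.imK ^ 2 := by
        rw [Quaternion.normSq_def']
      rw [hdef, hJ, hK] at this
      nlinarith [this]
    obtain ⟨θ, hc, hs⟩ := exists_cos_sin hsq
    refine ⟨θ, ?_⟩
    have : q * u = q' := by rw [hu, ← mul_assoc, hq2, one_mul]
    rw [← this]
    congr 1
    ext <;> simp [hc, hs, hJ, hK, Quaternion.re_smul] <;> simp [qi]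
  · rintro ⟨θ, rfl⟩
    set c : ℍ := ((Real.cos θ : ℝ) : ℍ) + (Real.sin θ) • qi with hcdef
    have hkey : c * qi * star c = qi := by
      have h1 : Real.cos θ ^ 2 + Real.sin θ ^ 2 = 1 := Real.cos_sq_add_sin_sq θ
      ext <;> simp [hcdef, Quaternion.re_mul, Quaternion.imI_mul,
        Quaternion.imJ_mul, Quaternion.imK_mul, Quaternion.re_smul] <;> simp [qi] <;> nlinarith [h1]
    calc q * qi * star q = q * (c * qi * star c) * star q := by rw [hkey]
      _ = q * c * qi * star (q * c) := by rw [star_mul]; noncomm_ring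
end
end

section
/- Let p and p' be purely imaginary unit quaternions with p' ≠ −p. Then r := (1 − p' * p) / ‖1 − p' * p‖ is a unit quaternion satisfying r * p * conj r = p'. Moreover r = √((1+⟨p,p'⟩)/2) + (p×p')/√(2+2⟨p,p'⟩), where ⟨p,p'⟩ = −Re(p*p') and p×p' = (p*p' − p'*p)/2. (This r is the dihedral quaternion Dihedral(p,p'), representing the minimal rotation taking p to p'.) -/
open Quaternion

noncomputable section

/-- The dihedral quaternion `Dihedral(p,p') = (1 - p'*p)/‖1 - p'*p‖`, representing the
minimal rotation taking `p` to `p'`. -/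
def Dihedral (p p' : ℍ) : ℍ := ((1 : ℍ) - p' * p) / ((‖(1 : ℍ) - p' * p‖ : ℝ) : ℍ)

/-- The Euclidean inner product of purely imaginary quaternions. -/
def qdot (p p' : ℍ) : ℝ := -(p * p').re

/-- The cross product of purely imaginary quaternions. -/
def qcross (p p' : ℍ) : ℍ := (p * p' - p' * p) / 2

theorem stmt_2 (p p' : ℍ) (hp : p.re = 0) (hp' : p'.re = 0)
    (hpn : ‖p‖ = 1) (hpn' : ‖p'‖ = 1) (hna : p' ≠ -p) :
    ‖Dihedral p p'‖ = 1 ∧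
    Dihedral p p' * p * star (Dihedral p p') = p' ∧
    Dihedral p p' =
      ((Real.sqrt ((1 + qdot p p') / 2) : ℝ) : ℍ)
        + qcross p p' / ((Real.sqrt (2 + 2 * qdot p p') : ℝ) : ℍ) := by
  set d : ℝ := qdot p p' with hd
  have hsp : star p = -p := Quaternion.star_eq_neg.mpr hp
  have hsp' : star p' = -p' := Quaternion.star_eq_neg.mpr hp'
  have hnsp : normSq p = 1 := by
    rw [Quaternion.normSq_eq_norm_mul_self, hpn]; ring
  have hnsp' : normSq p' = 1 := by
    rw [Quaternion.normSq_eq_norm_mul_self, hpn']; ring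
  have hpp : p * p = -1 := by
    have h := p.self_mul_star
    rw [hsp, hnsp, mul_neg, Quaternion.coe_one] at h
    exact neg_eq_iff_eq_neg.mp h
  have hpp' : p' * p' = -1 := by
    have h := p'.self_mul_star
    rw [hsp', hnsp', mul_neg, Quaternion.coe_one] at h
    exact neg_eq_iff_eq_neg.mp h
  have hc : p * p' + p' * p = ((-(2 * d) : ℝ) : ℍ) := by
    have h := Quaternion.self_add_star' (p * p')
    rw [star_mul, hsp, hsp', neg_mul_neg] at h
    rw [h]
    congr 1
    simp [hd, qdot]
    ring
  have hc' : p' * p = ((-(2 * d) : ℝ) : ℍ) - p * p' := by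
    rw [← hc]; noncomm_ring
  have c2 : ((2 : ℝ) : ℍ) = 2 := by
    rw [show (2 : ℝ) = 1 + 1 by norm_num, Quaternion.coe_add, Quaternion.coe_one]
    norm_num
  have h20 : (2 : ℍ) ≠ 0 := by
    rw [← c2]
    simpa using Quaternion.coe_injective.ne (two_ne_zero (α := ℝ))
  -- the key conjugation identity
  have hstar : star ((1 : ℍ) - p' * p) = 1 - p * p' := by
    rw [star_sub, star_one, star_mul, hsp, hsp', neg_mul_neg]
  have key : ((1 : ℍ) - p' * p) * p * star ((1 : ℍ) - p' * p)
      = ((2 + 2 * d : ℝ) : ℍ) * p' := by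
    rw [hstar]
    calc ((1 : ℍ) - p' * p) * p * (1 - p * p')
        = p - (p * p) * p' - p' * (p * p) + p' * ((p * p) * (p * p')) := by
          noncomm_ring
      _ = p + 2 * p' - (p' * p) * p' := by rw [hpp]; noncomm_ring
      _ = p + 2 * p' - (((-(2 * d) : ℝ) : ℍ) - p * p') * p' := by rw [hc']
      _ = p + 2 * p' - ((-(2 * d) : ℝ) : ℍ) * p' + p * (p' * p') := by
          noncomm_ring
      _ = 2 * p' - ((-(2 * d) : ℝ) : ℍ) * p' := by rw [hpp']; noncomm_ring
      _ = ((2 + 2 * d : ℝ) : ℍ) * p' := by push_cast [c2]; noncomm_ring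
  -- norm-squared of 1 - p'*p
  have hqs : ((1 : ℍ) - p' * p) * star ((1 : ℍ) - p' * p) = ((2 + 2 * d : ℝ) : ℍ) := by
    rw [hstar]
    calc ((1 : ℍ) - p' * p) * (1 - p * p')
        = 1 - (p * p' + p' * p) + p' * ((p * p) * p') := by noncomm_ring
      _ = 1 - ((-(2 * d) : ℝ) : ℍ) + p' * ((-1) * p') := by rw [hc, hpp]
      _ = 1 - ((-(2 * d) : ℝ) : ℍ) - p' * p' := by noncomm_ring
      _ = ((2 + 2 * d : ℝ) : ℍ) := by rw [hpp']; push_cast [c2]; noncomm_ring; simp only [two_smul, ← one_add_one_eq_two]; abel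
  have hnq : normSq ((1 : ℍ) - p' * p) = 2 + 2 * d := by
    have h := Quaternion.self_mul_star ((1 : ℍ) - p' * p)
    rw [hqs] at h
    exact (Quaternion.coe_injective h).symm
  -- positivity
  have hpos : 0 < 2 + 2 * d := by
    have hne : p + p' ≠ 0 := by
      intro h
      exact hna (eq_neg_of_add_eq_zero_right h)
    have hps : (p + p') * star (p + p') = ((2 + 2 * d : ℝ) : ℍ) := by
      rw [star_add, hsp, hsp']
      calc (p + p') * (-p + -p')
          = -(p * p) - (p * p' + p' * p) - p' * p' := by noncomm_ring
        _ = -(-1) - ((-(2 * d) : ℝ) : ℍ) - (-1) := by rw [hpp, hpp', hc]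
        _ = ((2 + 2 * d : ℝ) : ℍ) := by push_cast [c2]; noncomm_ring; simp only [two_smul, ← one_add_one_eq_two]; abel
    have h := Quaternion.self_mul_star (p + p')
    rw [hps] at h
    have h2 : (2 + 2 * d : ℝ) = normSq (p + p') := Quaternion.coe_injective h
    rw [h2, Quaternion.normSq_eq_norm_mul_self]
    have : 0 < ‖p + p'‖ := norm_pos_iff.mpr hne
    positivity
  set n : ℝ := Real.sqrt (2 + 2 * d) with hnd
  have hn : ‖(1 : ℍ) - p' * p‖ = n := by
    rw [hnd, ← hnq, Quaternion.normSq_eq_norm_mul_self,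
      Real.sqrt_mul_self (norm_nonneg _)]
  have hn0 : 0 < n := Real.sqrt_pos.mpr hpos
  have hn2 : n * n = 2 + 2 * d := Real.mul_self_sqrt hpos.le
  have hinv : (((n : ℝ) : ℍ))⁻¹ = ((n⁻¹ : ℝ) : ℍ) := by
    refine inv_eq_of_mul_eq_one_right ?_
    rw [← Quaternion.coe_mul, mul_inv_cancel₀ hn0.ne', Quaternion.coe_one]
  have hr : Dihedral p p' = (n⁻¹ : ℝ) • ((1 : ℍ) - p' * p) := by
    rw [Dihedral, hn, div_eq_mul_inv, hinv, Quaternion.mul_coe_eq_smul]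
  refine ⟨?_, ?_, ?_⟩
  · rw [Dihedral, hn, norm_div, hn, Quaternion.norm_coe,
      Real.norm_eq_abs, abs_of_pos hn0, div_self hn0.ne']
  · rw [hr, Quaternion.star_smul, smul_mul_assoc, smul_mul_assoc, mul_smul_comm,
      smul_smul, key, Quaternion.coe_mul_eq_smul, smul_smul,
      show n⁻¹ * n⁻¹ * (2 + 2 * d) = 1 from by field_simp; linarith [hn2], one_smul]
  · -- decomposition of 1 - p'*p
    have hqc2 : qcross p p' * 2 = p * p' - p' * p := by
      rw [qcross, div_mul_cancel₀ _ h20]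
    have hdec : (1 : ℍ) - p' * p = ((1 + d : ℝ) : ℍ) + qcross p p' := by
      have h2 : ((1 : ℍ) - p' * p) * 2 = (((1 + d : ℝ) : ℍ) + qcross p p') * 2 := by
        rw [add_mul, hqc2, hc']
        push_cast [c2]
        noncomm_ring
      exact mul_right_cancel₀ h20 h2
    have h1d : 0 < 1 + d := by linarith
    have hsq : Real.sqrt ((1 + d) / 2) = n⁻¹ * (1 + d) := by
      have hx : (1 + d) / 2 = (n⁻¹ * (1 + d)) ^ 2 := by
        rw [mul_pow, pow_two, pow_two, ← mul_inv, hn2]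
        field_simp
      rw [hx, Real.sqrt_sq (by positivity)]
    rw [hr, hdec, smul_add, hsq, Quaternion.smul_coe, div_eq_mul_inv, hinv,
      Quaternion.mul_coe_eq_smul]
end
end

section
/- Let p and p' be purely imaginary unit quaternions with p' ≠ p and p' ≠ −p. Let θ := arccos(⟨p,p'⟩) and u := (p×p')/‖p×p'‖. Then exp((θ/2) • u) = Dihedral(p,p'), i.e., the dihedral quaternion is the exponential of half the axis–angle vector of the minimal rotation taking p to p'. -/
open Quaternion

noncomputable section

set_option maxHeartbeats 1000000

private lemma aux_sq {a b : ℝ} (ha : 0 ≤ a) (hb : 0 ≤ b) (h : a ^ 2 = b ^ 2) : a = b := by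
  nlinarith [sq_nonneg (a - b), sq_nonneg (a + b)]

theorem stmt_3 (p p' : ℍ) (hp : p.re = 0) (hp' : p'.re = 0)
    (hpn : ‖p‖ = 1) (hpn' : ‖p'‖ = 1) (hne : p' ≠ p) (hna : p' ≠ -p) :
    NormedSpace.exp
        ((Real.arccos (qdot p p') / 2) • (‖qcross p p'‖⁻¹ • qcross p p')) =
      Dihedral p p' := by
  have hsp : star p = -p := Quaternion.star_eq_neg.2 hp
  have hsp' : star p' = -p' := Quaternion.star_eq_neg.2 hp'
  set d : ℝ := qdot p p' with hd
  set c : ℍ := qcross p p' with hc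
  have hre : (p * p').re = -d := by rw [hd]; simp [qdot]
  have hnsp : (Quaternion.normSq p : ℝ) = 1 := by
    rw [Quaternion.normSq_eq_norm_mul_self, hpn]; ring
  have hnsp' : (Quaternion.normSq p' : ℝ) = 1 := by
    rw [Quaternion.normSq_eq_norm_mul_self, hpn']; ring
  have hpp : p * p = -1 := by
    have h := Quaternion.self_mul_star p
    rw [hsp, mul_neg, hnsp] at h
    have := neg_eq_iff_eq_neg.1 h
    simpa using this
  have hpp' : p' * p' = -1 := by
    have h := Quaternion.self_mul_star p'
    rw [hsp', mul_neg, hnsp'] at h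
    have := neg_eq_iff_eq_neg.1 h
    simpa using this
  have h1 : p * p' + p' * p = (((-2) * d : ℝ) : ℍ) := by
    have hst : star (p * p') = p' * p := by rw [star_mul, hsp, hsp', neg_mul_neg]
    have h := Quaternion.self_add_star' (p * p')
    rw [hst, hre] at h
    rw [h]; norm_num
  have h2c : (2 : ℍ) = ((2 : ℝ) : ℍ) := by norm_cast
  have h20 : (2 : ℍ) ≠ 0 := by
    rw [h2c]
    simpa using Quaternion.coe_injective.ne (two_ne_zero (α := ℝ))
  have h2 : (2 : ℍ) * c = p * p' - p' * p := by
    rw [hc]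
    show (2:ℍ) * ((p * p' - p' * p) / 2) = _
    rw [div_eq_mul_inv, (Commute.ofNat_right (p * p' - p' * p) 2).inv_right₀.eq, ← mul_assoc,
      mul_inv_cancel₀ h20, one_mul]
  have h3 : p' * p = ((-d : ℝ) : ℍ) - c := by
    apply mul_left_cancel₀ h20
    rw [mul_sub, h2, show ((2:ℍ)) * ((-d:ℝ):ℍ) = (((-2) * d : ℝ) : ℍ) by rw [h2c, ← Quaternion.coe_mul]; norm_num,
      ← h1]
    noncomm_ring
  have h4 : p * p' = ((-d : ℝ) : ℍ) + c := by
    have e : p * p' = (2:ℍ) * c + p' * p := by rw [h2]; noncomm_ring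
    rw [e, h3]; noncomm_ring
  have hcre : c.re = 0 := by
    have e : c = p * p' - ((-d : ℝ) : ℍ) := by rw [h4]; noncomm_ring
    rw [e, Quaternion.re_sub, hre, Quaternion.re_coe]; ring
  have hstarc : star c = -c := Quaternion.star_eq_neg.2 hcre
  have hcc : c * c = ((d ^ 2 - 1 : ℝ) : ℍ) := by
    have e1 : (p * p') * (p' * p) = 1 := by
      rw [mul_assoc, ← mul_assoc p', hpp', neg_one_mul, mul_neg, hpp]; norm_num
    have hcomm : c * ((-d : ℝ) : ℍ) = ((-d : ℝ) : ℍ) * c :=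
      (Quaternion.coe_commutes (-d) c).symm
    have e2 : (((-d : ℝ) : ℍ) + c) * (((-d : ℝ) : ℍ) - c)
        = ((-d : ℝ) : ℍ) * ((-d : ℝ) : ℍ) - c * c := by
      rw [add_mul, mul_sub, mul_sub, hcomm]; abel
    rw [h4, h3, e2,
      show (((-d : ℝ) : ℍ)) * ((-d : ℝ) : ℍ) = ((d ^ 2 : ℝ) : ℍ) by push_cast; noncomm_ring] at e1
    have e3 : c * c = ((d ^ 2 : ℝ) : ℍ) - 1 := by rw [← e1]; noncomm_ring
    rw [e3]; push_cast; noncomm_ring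
  -- norm of c
  have hnormc2 : ‖c‖ ^ 2 = 1 - d ^ 2 := by
    have h := Quaternion.self_mul_star c
    rw [hstarc, mul_neg, hcc] at h
    have h' : ((1 - d ^ 2 : ℝ) : ℍ) = ((Quaternion.normSq c : ℝ) : ℍ) := by
      rw [← h, ← Quaternion.coe_neg]
      exact congrArg _ (by ring)
    have h2 := Quaternion.coe_injective h'
    rw [Quaternion.normSq_eq_norm_mul_self] at h2
    rw [sq, h2]
  -- bounds on d
  have hip : (inner ℝ p p' : ℝ) = d := by
    rw [Quaternion.inner_def, hsp', mul_neg, Quaternion.re_neg, hre]; ring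
  have hd_lt : d < 1 := by
    have hle : (inner ℝ p p' : ℝ) ≤ 1 := by
      have h := real_inner_le_norm p p'
      rwa [hpn, hpn', one_mul] at h
    rcases lt_or_eq_of_le hle with h | h
    · rwa [hip] at h
    · exact absurd ((inner_eq_one_iff_of_norm_eq_one hpn hpn').1 h).symm hne
  have hd_gt : -1 < d := by
    have hn' : ‖-p'‖ = 1 := by rwa [norm_neg]
    have hip2 : (inner ℝ p (-p') : ℝ) = -d := by rw [inner_neg_right, hip]
    have hle : (inner ℝ p (-p') : ℝ) ≤ 1 := by
      have h := real_inner_le_norm p (-p')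
      rwa [hpn, hn', one_mul] at h
    rcases lt_or_eq_of_le hle with h | h
    · rw [hip2] at h; linarith
    · exfalso
      have := (inner_eq_one_iff_of_norm_eq_one hpn hn').1 h
      exact hna (by rw [this, neg_neg])
  have h1pos : (0:ℝ) < 1 + d := by linarith
  have h1neg : (0:ℝ) < 1 - d := by linarith
  have hcpos : (0:ℝ) < 1 - d ^ 2 := by nlinarith
  have h2dpos : (0:ℝ) < 2 + 2 * d := by linarith
  have hcnorm : ‖c‖ = Real.sqrt (1 - d ^ 2) := by
    rw [← hnormc2, Real.sqrt_sq (norm_nonneg c)]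
  have hcn0 : ‖c‖ ≠ 0 := by rw [hcnorm]; positivity
  -- the angle
  set θ := Real.arccos d with hθ
  have hcosθ : Real.cos θ = d := Real.cos_arccos (by linarith) (le_of_lt hd_lt)
  have hθpos : 0 < θ := Real.arccos_pos.2 hd_lt
  have hθle : θ ≤ Real.pi := Real.arccos_le_pi d
  -- the exponential
  rw [smul_smul]
  have hqre : ((θ / 2 * ‖c‖⁻¹) • c).re = 0 := by
    rw [Quaternion.re_smul, hcre]; simp
  have hqnorm : ‖(θ / 2 * ‖c‖⁻¹) • c‖ = θ / 2 := by
    rw [norm_smul, Real.norm_eq_abs, abs_of_nonneg (by positivity), mul_assoc,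
      inv_mul_cancel₀ hcn0, mul_one]
  rw [Quaternion.exp_of_re_eq_zero _ hqre, hqnorm, smul_smul]
  have hcoef : Real.sin (θ / 2) / (θ / 2) * (θ / 2 * ‖c‖⁻¹) = Real.sin (θ / 2) * ‖c‖⁻¹ := by
    have : θ / 2 ≠ 0 := by positivity
    field_simp
  rw [hcoef]
  -- the dihedral side
  have hD1 : (1 : ℍ) - p' * p = ((1 + d : ℝ) : ℍ) + c := by
    rw [h3, Quaternion.coe_neg, Quaternion.coe_add, Quaternion.coe_one]; noncomm_ring
  have hDnorm : ‖(1 : ℍ) - p' * p‖ = Real.sqrt (2 + 2 * d) := by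
    have hstar2 : star (((1 + d : ℝ) : ℍ) + c) = ((1 + d : ℝ) : ℍ) - c := by
      rw [star_add, Quaternion.star_coe, hstarc, sub_eq_add_neg]
    have e2 : (((1 + d : ℝ) : ℍ) + c) * (((1 + d : ℝ) : ℍ) - c)
        = ((1 + d : ℝ) : ℍ) * ((1 + d : ℝ) : ℍ) - c * c := by
      rw [add_mul, mul_sub, mul_sub, (Quaternion.coe_commutes (1 + d) c).symm]; abel
    have h := Quaternion.self_mul_star (((1 + d : ℝ) : ℍ) + c)
    rw [hstar2, e2, hcc, ← Quaternion.coe_mul] at h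
    have h' : ((2 + 2 * d : ℝ) : ℍ) = ((Quaternion.normSq (((1 + d : ℝ) : ℍ) + c) : ℝ) : ℍ) := by
      rw [← h, ← Quaternion.coe_sub]
      exact congrArg _ (by ring)
    have h2 := Quaternion.coe_injective h'
    rw [Quaternion.normSq_eq_norm_mul_self] at h2
    rw [hD1, ← Real.sqrt_mul_self (norm_nonneg (((1 + d : ℝ) : ℍ) + c)), ← h2]
  have hDen : Dihedral p p'
      = ((Real.sqrt (2 + 2 * d))⁻¹ * (1 + d) : ℝ) + (Real.sqrt (2 + 2 * d))⁻¹ • c := by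
    unfold Dihedral
    rw [hDnorm, hD1, div_eq_mul_inv, ← Quaternion.coe_inv, Quaternion.mul_coe_eq_smul,
      smul_add, Quaternion.smul_coe]
  rw [hDen]
  -- two real identities
  have hA : Real.cos (θ / 2) = (Real.sqrt (2 + 2 * d))⁻¹ * (1 + d) := by
    rw [Real.cos_half (by linarith [Real.arccos_nonneg d, Real.pi_pos]) hθle, hcosθ]
    refine aux_sq (Real.sqrt_nonneg _) (by positivity) ?_
    rw [Real.sq_sqrt (by linarith), mul_pow, inv_pow, Real.sq_sqrt (by linarith)]
    field_simp
  have hB : Real.sin (θ / 2) * ‖c‖⁻¹ = (Real.sqrt (2 + 2 * d))⁻¹ := by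
    rw [Real.sin_half_eq_sqrt (by linarith) (by linarith [Real.pi_pos]), hcosθ, hcnorm]
    refine aux_sq (by positivity) (by positivity) ?_
    rw [mul_pow, inv_pow, inv_pow, Real.sq_sqrt (by linarith), Real.sq_sqrt (le_of_lt hcpos),
      Real.sq_sqrt (by linarith)]
    rw [show (1 : ℝ) - d ^ 2 = (1 - d) * (1 + d) by ring]
    field_simp
  rw [hA, hB]
end
end

section
/- Let p₀ and p₁ be purely imaginary unit quaternions with p₁ ≠ p₀ and p₁ ≠ −p₀, and let v := arccos(⟨p₀,p₁⟩) • ((p₀×p₁)/‖p₀×p₁‖). Define c : ℝ → ℍ by c(t) := exp((t/2) • v) * p₀ * exp(−(t/2) • v). Then for every t ∈ ℝ the quaternion c(t) is purely imaginary with norm 1 and lies in the real span of {p₀, p₁}, and c(0) = p₀ and c(1) = p₁. (Thus c parametrizes the great circular arc on S² joining p₀ and p₁.) -/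
open Quaternion

noncomputable section

lemma qcross_eq (p p' : ℍ) : qcross p p' = (2:ℝ)⁻¹ • (p * p' - p' * p) := by
  rw [qcross, div_eq_mul_inv, show ((2:ℍ)) = ((2:ℝ):ℍ) by norm_cast,
    ← Quaternion.coe_inv, mul_coe_eq_smul]

lemma L1 (p p' : ℍ) (hp : p.re = 0) (hp' : p'.re = 0) : (qcross p p').re = 0 := by
  simp [qcross_eq, hp, hp', Quaternion.re_mul]; ring

lemma L2 (p p' : ℍ) (hp : p.re = 0) (hp' : p'.re = 0) :
    normSq (qcross p p') = normSq p * normSq p' - (qdot p p')^2 := by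
  simp [qcross_eq, qdot, normSq_def', hp, hp']; ring

lemma L3 (p p' : ℍ) (hp : p.re = 0) (hp' : p'.re = 0) :
    qcross p p' * p + p * qcross p p' = 0 := by
  ext <;> simp [qcross_eq, hp, hp'] <;> ring

lemma L4 (p p' : ℍ) (hp : p.re = 0) (hp' : p'.re = 0) :
    qcross p p' * p = normSq p • p' - qdot p p' • p := by
  ext <;> simp [qcross_eq, qdot, normSq_def', hp, hp'] <;> ring

lemma L5 (q : ℍ) (hq : q.re = 0) : q * q = -((normSq q : ℝ) : ℍ) := by
  have hs : star q = -q := by ext <;> simp [hq]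
  calc q * q = -(star q * q) := by rw [hs, neg_mul, neg_neg]
  _ = -((normSq q : ℝ) : ℍ) := by rw [Quaternion.star_mul_self]

lemma L6m (p p' : ℍ) (hp : p.re = 0) (hp' : p'.re = 0) :
    normSq (p' - p) = normSq p + normSq p' - 2 * qdot p p' := by
  simp [qdot, normSq_def', hp, hp']; ring

lemma L6p (p p' : ℍ) (hp : p.re = 0) (hp' : p'.re = 0) :
    normSq (p' + p) = normSq p + normSq p' + 2 * qdot p p' := by
  simp [qdot, normSq_def', hp, hp']; ring

lemma L7 (u : ℝ) : Real.sin |u| * u = Real.sin u * |u| := by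
  rcases abs_cases u with ⟨h, _⟩ | ⟨h, _⟩ <;> rw [h] <;> ring_nf <;>
    simp [Real.sin_neg] <;> ring

lemma expn (n : ℍ) (hnre : n.re = 0) (hn : ‖n‖ = 1) (u : ℝ) :
    NormedSpace.exp (u • n) = ((Real.cos u : ℝ) : ℍ) + (Real.sin u) • n := by
  rw [Quaternion.exp_of_re_eq_zero (u • n) (by simp [hnre])]
  rw [norm_smul, hn, mul_one, Real.norm_eq_abs, Real.cos_abs]
  congr 1
  rw [smul_smul]
  rcases eq_or_ne u 0 with rfl | hu
  · simp
  · congr 1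
    field_simp
    rw [L7]
    ring

lemma key (n p : ℍ) (hnn : n * n = -1) (ha : n * p = -(p * n)) (C S : ℝ) :
    ((C:ℍ) + S • n) * (p * ((C:ℍ) + (-S) • n)) = (C^2 - S^2) • p + (2*C*S) • (n * p) := by
  have hpn : p * n = -(n * p) := by rw [ha, neg_neg]
  have hnpn : n * (p * n) = p := by
    rw [hpn, mul_neg, ← mul_assoc, hnn, neg_mul, one_mul, neg_neg]
  simp only [mul_add, add_mul, mul_smul_comm, smul_mul_assoc, mul_coe_eq_smul,
    coe_mul_eq_smul, smul_smul]
  simp only [hnpn]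
  simp only [hpn, smul_neg]
  module

theorem stmt_4 (p₀ p₁ : ℍ) (hp₀ : p₀.re = 0) (hp₁ : p₁.re = 0)
    (hn₀ : ‖p₀‖ = 1) (hn₁ : ‖p₁‖ = 1) (hne : p₁ ≠ p₀) (hna : p₁ ≠ -p₀)
    (v : ℍ) (hv : v = Real.arccos (qdot p₀ p₁) • (‖qcross p₀ p₁‖⁻¹ • qcross p₀ p₁))
    (c : ℝ → ℍ)
    (hc : ∀ t : ℝ, c t =
      NormedSpace.exp ((t / 2) • v) * p₀ * NormedSpace.exp (-((t / 2) • v))) :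
    (∀ t : ℝ, (c t).re = 0 ∧ ‖c t‖ = 1 ∧ c t ∈ Submodule.span ℝ ({p₀, p₁} : Set ℍ)) ∧
    c 0 = p₀ ∧ c 1 = p₁ := by
  set d := qdot p₀ p₁ with hd
  set q := qcross p₀ p₁ with hqdef
  have hn₀2 : normSq p₀ = 1 := by rw [normSq_eq_norm_mul_self, hn₀]; ring
  have hn₁2 : normSq p₁ = 1 := by rw [normSq_eq_norm_mul_self, hn₁]; ring
  have hqre : q.re = 0 := L1 p₀ p₁ hp₀ hp₁
  have hs2 : ‖q‖ ^ 2 = 1 - d ^ 2 := by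
    rw [sq, ← normSq_eq_norm_mul_self, L2 p₀ p₁ hp₀ hp₁, hn₀2, hn₁2]; ring
  have hqne : q ≠ 0 := by
    intro h
    have hd2 : d * d = 1 := by
      rw [h, norm_zero] at hs2; nlinarith
    rcases mul_self_eq_one_iff.mp hd2 with h1 | h1
    · have h6 := L6m p₀ p₁ hp₀ hp₁
      rw [hn₀2, hn₁2, ← hd, h1] at h6
      have : p₁ - p₀ = 0 := normSq_eq_zero.mp (by rw [h6]; ring)
      exact hne (sub_eq_zero.mp this)
    · have h6 := L6p p₀ p₁ hp₀ hp₁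
      rw [hn₀2, hn₁2, ← hd, h1] at h6
      have : p₁ + p₀ = 0 := normSq_eq_zero.mp (by rw [h6]; ring)
      exact hna (eq_neg_of_add_eq_zero_left this)
  set s := ‖q‖ with hsdef
  have hspos : 0 < s := norm_pos_iff.mpr hqne
  have hdle : -1 ≤ d ∧ d ≤ 1 := by constructor <;> nlinarith [sq_nonneg s, hs2, sq_nonneg (d-1), sq_nonneg (d+1)]
  set θ := Real.arccos d with hθ
  have hcos : Real.cos θ = d := Real.cos_arccos hdle.1 hdle.2
  have hsin : Real.sin θ = s := by
    rw [hθ, Real.sin_arccos, ← hs2, Real.sqrt_sq hspos.le]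
  set n : ℍ := s⁻¹ • q with hn
  have hnre : n.re = 0 := by simp [hn, hqre]
  have hnn1 : ‖n‖ = 1 := by
    rw [hn, norm_smul, Real.norm_eq_abs, abs_of_pos (inv_pos.2 hspos), ← hsdef,
      inv_mul_cancel₀ hspos.ne']
  have hnsq : n * n = -1 := by
    rw [hn, smul_mul_assoc, mul_smul_comm, smul_smul, L5 q hqre]
    have h1 : normSq q = s * s := by rw [normSq_eq_norm_mul_self]
    rw [h1, smul_neg, Quaternion.smul_coe,
      show s⁻¹ * s⁻¹ * (s * s) = 1 by field_simp]
    norm_num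
  have hanti : n * p₀ = -(p₀ * n) := by
    have h3 := L3 p₀ p₁ hp₀ hp₁
    rw [hn, smul_mul_assoc, mul_smul_comm, ← smul_neg]
    congr 1
    exact eq_neg_of_add_eq_zero_left h3
  have hnp : n * p₀ = s⁻¹ • (p₁ - d • p₀) := by
    rw [hn, smul_mul_assoc, L4 p₀ p₁ hp₀ hp₁, hn₀2, one_smul]
  have hv' : v = θ • n := by rw [hv]
  have hct : ∀ t : ℝ, c t =
      (Real.cos (t * θ)) • p₀ + (Real.sin (t * θ)) • (n * p₀) := by
    intro t
    have h1 : (t / 2) • v = (t * θ / 2) • n := by rw [hv', smul_smul]; ring_nf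
    rw [hc t, h1, show -((t * θ / 2) • n) = (-(t * θ / 2)) • n from (neg_smul _ _).symm,
      expn n hnre hnn1, expn n hnre hnn1, Real.cos_neg, Real.sin_neg,
      mul_assoc]
    rw [key n p₀ hnsq hanti (Real.cos (t * θ / 2)) (Real.sin (t * θ / 2))]
    obtain ⟨u, hu⟩ : ∃ u, t * θ / 2 = u := ⟨_, rfl⟩
    rw [hu, show t * θ = 2 * u by rw [← hu]; ring, Real.cos_two_mul, Real.sin_two_mul]
    congr 1
    · congr 1
      nlinarith [Real.sin_sq_add_cos_sq u]
    · congr 1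
      ring
  have hvre : v.re = 0 := by rw [hv']; simp [hnre]
  have hexpnorm : ∀ x : ℍ, x.re = 0 → ‖NormedSpace.exp x‖ = 1 := by
    intro x hx
    rw [Quaternion.norm_exp, hx, NormedSpace.exp_zero, norm_one]
  have hmem₀ : p₀ ∈ Submodule.span ℝ ({p₀, p₁} : Set ℍ) :=
    Submodule.subset_span (by simp)
  have hmem₁ : p₁ ∈ Submodule.span ℝ ({p₀, p₁} : Set ℍ) :=
    Submodule.subset_span (by simp)
  refine ⟨fun t => ⟨?_, ?_, ?_⟩, ?_, ?_⟩
  · rw [hct t, hnp]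
    simp [hp₀, hp₁]
  · rw [hc t, norm_mul, norm_mul, hexpnorm _ (by simp [hvre]),
      hexpnorm _ (by simp [hvre]), hn₀]
    ring
  · rw [hct t, hnp]
    exact Submodule.add_mem _ (Submodule.smul_mem _ _ hmem₀)
      (Submodule.smul_mem _ _ (Submodule.smul_mem _ _
        (Submodule.sub_mem _ hmem₁ (Submodule.smul_mem _ _ hmem₀))))
  · rw [hct 0]; simp
  · rw [hct 1, hnp, one_mul, hcos, hsin, smul_smul, mul_inv_cancel₀ hspos.ne', one_smul]
    module
end
end

section
/- Let q be a unit quaternion and let v be a purely imaginary quaternion satisfying Re(v * (q * 𝕚 * conj q)) = 0 (i.e., v is orthogonal to π(q)). Define γ̃ : ℝ → ℍ by γ̃(t) := exp((t/2) • v) * q. Then (i) γ̃(t) is a unit quaternion and π(γ̃(t)) = exp((t/2) • v) * π(q) * exp(−(t/2) • v) for all t; (ii) the derivative of γ̃ at t equals (1/2) • (exp((t/2) • v) * (v * q)); and (iii) Re(𝕚 * conj(γ̃(t)) * γ̃'(t)) = 0 for all t, i.e., the lifted curve γ̃ is horizontal with respect to the 1-form α = 2Re(𝕚 conj(q) dq)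 on S³. -/
open Quaternion

noncomputable section

/-- The Hopf map sends a unit quaternion `q` to `q * 𝕚 * conj q`. -/
def hopf (q : ℍ) : ℍ := q * qi * star q

lemma re_mul_comm (a b : ℍ) : (a * b).re = (b * a).re := by
  simp [Quaternion.re_mul]; ring

theorem stmt_5 (q : ℍ) (hq : ‖q‖ = 1) (v : ℍ) (hv : v.re = 0)
    (horth : (v * hopf q).re = 0)
    (γ : ℝ → ℍ) (hγ : ∀ t : ℝ, γ t = NormedSpace.exp ((t / 2) • v) * q) :
    (∀ t : ℝ, ‖γ t‖ = 1 ∧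
        hopf (γ t) =
          NormedSpace.exp ((t / 2) • v) * hopf q * NormedSpace.exp (-((t / 2) • v))) ∧
    (∀ t : ℝ, HasDerivAt γ ((1 / 2 : ℝ) • (NormedSpace.exp ((t / 2) • v) * (v * q))) t) ∧
    (∀ t : ℝ,
        (qi * star (γ t) *
          ((1 / 2 : ℝ) • (NormedSpace.exp ((t / 2) • v) * (v * q)))).re = 0) := by
  have hvstar : star v = -v := by
    ext <;> simp [hv]
  have hstar : ∀ t : ℝ, star (NormedSpace.exp ((t / 2) • v)) =
      NormedSpace.exp (-((t / 2) • v)) := by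
    intro t
    rw [NormedSpace.star_exp]
    congr 1
    simp [hvstar]
  have hEinv : ∀ t : ℝ, NormedSpace.exp (-((t / 2) • v)) *
      NormedSpace.exp ((t / 2) • v) = 1 := by
    intro t
    letI : NormedAlgebra ℚ ℍ := NormedAlgebra.restrictScalars ℚ ℝ ℍ
    rw [← NormedSpace.exp_add_of_commute (Commute.neg_left (Commute.refl _)),
      neg_add_cancel, NormedSpace.exp_zero]
  have key : (qi * star q * v * q).re = 0 := by
    calc (qi * star q * v * q).re = (q * (qi * star q * v)).re := re_mul_comm _ _
      _ = ((q * qi * star q) * v).re := by simp only [mul_assoc]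
      _ = (v * (q * qi * star q)).re := re_mul_comm _ _
      _ = 0 := by rw [← hopf]; exact horth
  refine ⟨fun t => ⟨?_, ?_⟩, fun t => ?_, fun t => ?_⟩
  · rw [hγ, norm_mul, hq, mul_one, Quaternion.norm_exp]
    simp [hv]
  · rw [hγ, hopf, ← hstar, star_mul, hstar]
    unfold hopf
    simp [mul_assoc]
  · have h1 : HasDerivAt (fun u : ℝ => NormedSpace.exp (u • v))
        (NormedSpace.exp ((t / 2) • v) * v) (t / 2) :=
      hasDerivAt_exp_smul_const v (t / 2)
    have h2 : HasDerivAt (fun u : ℝ => u / 2) (1 / 2 : ℝ) t := by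
      simpa using (hasDerivAt_id t).div_const 2
    have h3 := (h1.scomp t h2).mul_const q
    have hfun : γ = fun t : ℝ => ((fun u : ℝ => NormedSpace.exp (u • v)) ∘
        fun u : ℝ => u / 2) t * q := funext hγ
    rw [hfun]
    convert h3 using 1
    · rfl
    simp [mul_assoc, smul_mul_assoc]
  · rw [hγ, star_mul, hstar, mul_smul_comm]
    have heq : qi * (star q * NormedSpace.exp (-((t / 2) • v))) *
        (NormedSpace.exp ((t / 2) • v) * (v * q)) = qi * star q * v * q := by
      calc qi * (star q * NormedSpace.exp (-((t / 2) • v))) *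
          (NormedSpace.exp ((t / 2) • v) * (v * q))
          = qi * (star q * ((NormedSpace.exp (-((t / 2) • v)) *
            NormedSpace.exp ((t / 2) • v)) * (v * q))) := by
            simp only [mul_assoc]
        _ = qi * star q * v * q := by rw [hEinv]; simp only [one_mul, mul_assoc]
    rw [heq]
    simp [key]
end
end

section
/- Let p and p' be purely imaginary unit quaternions with p' ≠ −p, and let q and q' be unit quaternions with q * 𝕚 * conj q = p and q' * 𝕚 * conj q' = p'. Then the quaternion c := conj(q') * Dihedral(p,p') * q has norm 1 and its 𝕛-component and 𝕜-component both vanish; that is, c lies in the circle subgroup {a + b•𝕚 : a,b ∈ ℝ, a² + b² = 1}. (Hence the argument arg(c) appearing in the area formula is well defined.) -/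
open Quaternion

noncomputable section

private lemma key_lemma (p p' : ℍ) (hp : p.re = 0) (hp' : p'.re = 0)
    (hN : normSq p = 1) (hN' : normSq p' = 1) :
    ((1:ℍ) - p' * p) * p * ((1:ℍ) - p * p') = ((normSq ((1:ℍ) - p' * p) : ℝ) : ℍ) * p' := by
  rw [Quaternion.normSq_def'] at hN hN' ⊢
  rw [hp] at hN; rw [hp'] at hN'
  simp only [ne_eq, OfNat.ofNat_ne_zero, not_false_eq_true, zero_pow, zero_add] at hN hN'
  ext <;>
    simp only [Quaternion.re_mul, Quaternion.imI_mul, Quaternion.imJ_mul, Quaternion.imK_mul,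
      Quaternion.re_sub, Quaternion.imI_sub, Quaternion.imJ_sub, Quaternion.imK_sub,
      Quaternion.re_one, Quaternion.imI_one, Quaternion.imJ_one, Quaternion.imK_one,
      Quaternion.re_coe, Quaternion.imI_coe, Quaternion.imJ_coe, Quaternion.imK_coe,
      hp, hp']
  · ring
  · linear_combination ((1 + 2*(p.imI*p'.imI + p.imJ*p'.imJ + p.imK*p'.imK)) * p'.imI - p.imI) * hN
      + (-(p.imI^2+p.imJ^2+p.imK^2) * (p'.imI + p.imI)) * hN'
  · linear_combination ((1 + 2*(p.imI*p'.imI + p.imJ*p'.imJ + p.imK*p'.imK)) * p'.imJ - p.imJ) * hN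
      + (-(p.imI^2+p.imJ^2+p.imK^2) * (p'.imJ + p.imJ)) * hN'
  · linear_combination ((1 + 2*(p.imI*p'.imI + p.imJ*p'.imJ + p.imK*p'.imK)) * p'.imK - p.imK) * hN
      + (-(p.imI^2+p.imJ^2+p.imK^2) * (p'.imK + p.imK)) * hN'

theorem stmt_7 (p p' : ℍ) (hp : p.re = 0) (hp' : p'.re = 0)
    (hpn : ‖p‖ = 1) (hpn' : ‖p'‖ = 1) (hna : p' ≠ -p)
    (q q' : ℍ) (hq : ‖q‖ = 1) (hq' : ‖q'‖ = 1)
    (hqp : q * qi * star q = p) (hqp' : q' * qi * star q' = p') :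
    ‖star q' * Dihedral p p' * q‖ = 1 ∧
    (star q' * Dihedral p p' * q).imJ = 0 ∧
    (star q' * Dihedral p p' * q).imK = 0 := by
  have hNp : normSq p = 1 := by rw [Quaternion.normSq_eq_norm_mul_self, hpn]; ring
  have hNp' : normSq p' = 1 := by rw [Quaternion.normSq_eq_norm_mul_self, hpn']; ring
  have hsp : star p = -p := by ext <;> simp [hp]
  have hsp' : star p' = -p' := by ext <;> simp [hp']
  set u : ℍ := (1:ℍ) - p' * p with hu
  -- u ≠ 0
  have hu0 : u ≠ 0 := by
    intro h
    have h1 : p' * p = 1 := (sub_eq_zero.mp h).symm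
    apply hna
    have h2 : p' * (p' * p) = p' := by rw [h1, mul_one]
    have h3 : p' * p' = -1 := by
      have h4 := Quaternion.star_mul_self p'
      rw [hsp', hNp', neg_mul] at h4
      have h5 : -(p' * p') = 1 := by simpa using h4
      exact neg_eq_iff_eq_neg.mp h5
    rw [← mul_assoc, h3] at h2
    simpa using h2.symm
  have hru : ‖u‖ ≠ 0 := norm_ne_zero_iff.mpr hu0
  have hstaru : star u = 1 - p * p' := by
    rw [hu, star_sub, star_one, star_mul, hsp, hsp', neg_mul_neg]
  -- D conjugates p to p'
  have hD : Dihedral p p' = (‖u‖⁻¹ : ℝ) • u := by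
    rw [Dihedral, div_eq_mul_inv, ← Quaternion.coe_inv, Quaternion.mul_coe_eq_smul]
  have hnormSqu : normSq u = ‖u‖ * ‖u‖ := Quaternion.normSq_eq_norm_mul_self u
  have hDpD : Dihedral p p' * p * star (Dihedral p p') = p' := by
    rw [hD, Quaternion.star_smul, hstaru, smul_mul_assoc, smul_mul_assoc, mul_smul_comm, smul_smul]
    have := key_lemma p p' hp hp' hNp hNp'
    rw [← hu] at this
    rw [this, hnormSqu]
    rw [Quaternion.coe_mul_eq_smul, smul_smul]
    rw [show ‖u‖⁻¹ * ‖u‖⁻¹ * (‖u‖ * ‖u‖) = 1 by field_simp]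
    rw [one_smul]
  set c : ℍ := star q' * Dihedral p p' * q with hc
  have hnormD : ‖Dihedral p p'‖ = 1 := by
    rw [Dihedral, norm_div, Quaternion.norm_coe, norm_norm, div_self hru]
  have hnc : ‖c‖ = 1 := by
    rw [hc, norm_mul, norm_mul, Quaternion.norm_star, hq, hq', hnormD]; ring
  refine ⟨hnc, ?_⟩
  -- c * qi * star c = qi
  have hq'1 : star q' * q' = 1 := by
    rw [Quaternion.star_mul_self, Quaternion.normSq_eq_norm_mul_self, hq']
    norm_num
  have hcqi : c * qi * star c = qi := by
    have hsc : star c = star q * star (Dihedral p p') * q' := by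
      rw [hc, star_mul, star_mul, star_star, mul_assoc]
    rw [hc, hsc]
    have e1 : star q' * Dihedral p p' * q * qi * (star q * star (Dihedral p p') * q')
        = star q' * (Dihedral p p' * (q * qi * star q) * star (Dihedral p p')) * q' := by
      simp only [mul_assoc]
    rw [e1, hqp, hDpD, ← hqp']
    have e2 : star q' * (q' * qi * star q') * q' = (star q' * q') * qi * (star q' * q') := by
      simp only [mul_assoc]
    rw [e2, hq'1, one_mul, mul_one]
  -- hence c commutes with qi
  have hcc : star c * c = 1 := by
    rw [Quaternion.star_mul_self, Quaternion.normSq_eq_norm_mul_self, hnc]; norm_num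
  have hcomm : c * qi = qi * c := by
    calc c * qi = c * qi * (star c * c) := by rw [hcc, mul_one]
    _ = (c * qi * star c) * c := by simp only [mul_assoc]
    _ = qi * c := by rw [hcqi]
  constructor
  · have := congrArg QuaternionAlgebra.imK hcomm
    rw [Quaternion.imK_mul (a := c) (b := qi), Quaternion.imK_mul (a := qi) (b := c)] at this
    simp only [qi] at this
    simp only [mul_zero, mul_one, zero_mul, one_mul, zero_add, add_zero, zero_sub, sub_zero] at this
    linarith
  · have := congrArg QuaternionAlgebra.imJ hcomm
    rw [Quaternion.imJ_mul (a := c) (b := qi), Quaternion.imJ_mul (a := qi) (b := c)] at this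
    simp only [qi] at this
    simp only [mul_zero, mul_one, zero_mul, one_mul, zero_add, add_zero, zero_sub, sub_zero] at this
    linarith
end
end

section
/- Let n ≥ 1 and let p : ZMod n → ℍ assign to each index a purely imaginary unit quaternion with p(i+1) ≠ −p(i) for all i (a spherical polygon with no antipodal edge). Let q, q' : ZMod n → ℍ be two families of unit quaternions with q(i) * 𝕚 * conj(q(i)) = p(i) and q'(i) * 𝕚 * conj(q'(i)) = p(i) for all i (two choices of Hopf lifts of the vertices). For each i let cᵢ and c'ᵢ denote the complex numbers (elements of the circle subgroup spanned by 1 and 𝕚) corresponding to conj(q(i+1)) * Dihedral(p(i),p(i+1)) * q(i) and conj(q'(i+1)) * Dihedral(p(i),p(i+1)) * q'(i) respectively. Then ∏_{i ∈ ZMod n} cᵢ = ∏_{i ∈ ZMod n} c'ᵢ. (Hence the sum 2∑ᵢ arg(cᵢ) in the area formula is, modulo 4π, independent of the choice of lifts.) -/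
open Quaternion

noncomputable section

/-- The complex number `a + b·I` corresponding to a quaternion `a + b•𝕚`
(forgetting the `𝕛` and `𝕜` components). -/
def toCirc (x : ℍ) : ℂ := ⟨x.re, x.imI⟩

lemma keyN (p p' : ℍ) (hp2 : p * p = -1) (hp'2 : p' * p' = -1) :
    (1 - p' * p) * p * (1 - p * p') = ((1 - p' * p) * (1 - p * p')) * p' := by
  have hpp : ∀ x : ℍ, p * (p * x) = -x := fun x => by rw [← mul_assoc, hp2, neg_one_mul]
  noncomm_ring
  simp only [hp2, hp'2, hpp, mul_neg_one, mul_neg, neg_neg, smul_neg, one_smul, neg_smul]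
  noncomm_ring

lemma unit_mul_star (q : ℍ) (h : ‖q‖ = 1) : q * star q = 1 := by
  rw [Quaternion.self_mul_star, Quaternion.normSq_eq_norm_mul_self, h, mul_one]
  norm_cast

lemma pure_sq (p : ℍ) (hre : p.re = 0) (hn : ‖p‖ = 1) : p * p = -1 := by
  have hs : star p = -p := Quaternion.star_eq_neg.2 hre
  have := unit_mul_star p hn
  rw [hs, mul_neg] at this
  exact neg_eq_iff_eq_neg.mp this

lemma dihedral_conj (p p' : ℍ) (hre : p.re = 0) (hre' : p'.re = 0)
    (hn : ‖p‖ = 1) (hn' : ‖p'‖ = 1) (hna : p' ≠ -p) :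
    Dihedral p p' * p * star (Dihedral p p') = p' := by
  set N : ℍ := 1 - p' * p with hN
  have hp2 := pure_sq p hre hn
  have hp'2 := pure_sq p' hre' hn'
  have hNne : N ≠ 0 := by
    intro h
    apply hna
    have h1 : p' * p = 1 := by rwa [hN, sub_eq_zero, eq_comm] at h
    have := congrArg (· * p) h1
    simp only [mul_assoc, hp2, one_mul, mul_neg_one] at this
    exact neg_eq_iff_eq_neg.mp this
  have hr : ‖N‖ ≠ 0 := norm_ne_zero_iff.2 hNne
  have hstarN : star N = 1 - p * p' := by
    rw [hN, star_sub, star_one, star_mul, Quaternion.star_eq_neg.2 hre,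
      Quaternion.star_eq_neg.2 hre', neg_mul_neg]
  have hNN : N * star N = ((‖N‖^2 : ℝ) : ℍ) := by
    rw [Quaternion.self_mul_star, Quaternion.normSq_eq_norm_mul_self, sq]
  have hkey : N * p * star N = ((‖N‖^2 : ℝ) : ℍ) * p' := by
    rw [hstarN, keyN p p' hp2 hp'2, ← hstarN, hNN]
  have hD : Dihedral p p' = ‖N‖⁻¹ • N := by
    rw [Dihedral, div_eq_mul_inv, ← Quaternion.coe_inv, Quaternion.mul_coe_eq_smul]
  rw [hD, Quaternion.star_smul]
  simp only [smul_mul_assoc, mul_smul_comm, smul_smul, ← mul_assoc]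
  rw [hkey, Quaternion.coe_mul_eq_smul, smul_smul]
  have : ‖N‖⁻¹ * ‖N‖⁻¹ * ‖N‖^2 = 1 := by field_simp
  rw [this, one_smul]

lemma dihedral_norm (p p' : ℍ) (hre : p.re = 0) (hre' : p'.re = 0)
    (hn : ‖p‖ = 1) (hn' : ‖p'‖ = 1) (hna : p' ≠ -p) : ‖Dihedral p p'‖ = 1 := by
  have hp2 := pure_sq p hre hn
  have hNne : (1 : ℍ) - p' * p ≠ 0 := by
    intro h
    apply hna
    have h1 : p' * p = 1 := by rwa [sub_eq_zero, eq_comm] at h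
    have := congrArg (· * p) h1
    simp only [mul_assoc, hp2, one_mul, mul_neg_one] at this
    exact neg_eq_iff_eq_neg.mp this
  have hr : ‖(1:ℍ) - p' * p‖ ≠ 0 := norm_ne_zero_iff.2 hNne
  rw [Dihedral, norm_div, Quaternion.norm_coe, norm_norm, div_self hr]

lemma unit_star_mul (q : ℍ) (h : ‖q‖ = 1) : star q * q = 1 := by
  rw [Quaternion.star_mul_self, Quaternion.normSq_eq_norm_mul_self, h, mul_one]
  norm_cast

lemma comm_qi_of (x : ℍ) (h : x * qi * star x = qi) (hx : ‖x‖ = 1) : x * qi = qi * x := by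
  have := congrArg (· * x) h
  simpa [mul_assoc, unit_star_mul x hx] using this

lemma circ_of_comm (x : ℍ) (h : x * qi = qi * x) : x.imJ = 0 ∧ x.imK = 0 := by
  rw [Quaternion.ext_iff] at h
  simp [Quaternion.imJ_mul, Quaternion.imK_mul] at h
  simp [qi] at h
  constructor <;> linarith [h.1, h.2]

lemma toCirc_mul (x y : ℍ) (hx : x.imJ = 0 ∧ x.imK = 0) :
    toCirc (x * y) = toCirc x * toCirc y := by
  apply Complex.ext <;>
    simp [toCirc, Quaternion.re_mul, Quaternion.imI_mul, Complex.mul_re, Complex.mul_im,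
      hx.1, hx.2]

lemma toCirc_star (x : ℍ) : toCirc (star x) = (starRingEnd ℂ) (toCirc x) := by
  apply Complex.ext <;> simp [toCirc]

lemma toCirc_conj_mul (x : ℍ) (hx : x.imJ = 0 ∧ x.imK = 0) (h : ‖x‖ = 1) :
    (starRingEnd ℂ) (toCirc x) * toCirc x = 1 := by
  have h1 : Quaternion.normSq x = 1 := by
    rw [Quaternion.normSq_eq_norm_mul_self, h, mul_one]
  rw [Quaternion.normSq_def', hx.1, hx.2] at h1
  have : Complex.normSq (toCirc x) = 1 := by
    rw [Complex.normSq_apply]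
    simpa [toCirc, sq] using h1
  rw [mul_comm, Complex.mul_conj, this]
  norm_num

lemma conj_lift (qq pp : ℍ) (h1 : ‖qq‖ = 1) (h : qq * qi * star qq = pp) :
    star qq * pp * qq = qi := by
  rw [← h]
  calc star qq * (qq * qi * star qq) * qq
      = (star qq * qq) * qi * (star qq * qq) := by simp only [mul_assoc]
    _ = qi := by rw [unit_star_mul qq h1, one_mul, mul_one]

theorem stmt_8 (n : ℕ) [NeZero n] (p q q' : ZMod n → ℍ)
    (hpim : ∀ i, (p i).re = 0) (hpn : ∀ i, ‖p i‖ = 1)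
    (hna : ∀ i, p (i + 1) ≠ -p i)
    (hq : ∀ i, ‖q i‖ = 1) (hq' : ∀ i, ‖q' i‖ = 1)
    (hlift : ∀ i, q i * qi * star (q i) = p i)
    (hlift' : ∀ i, q' i * qi * star (q' i) = p i) :
    (∏ i : ZMod n, toCirc (star (q (i + 1)) * Dihedral (p i) (p (i + 1)) * q i)) =
      ∏ i : ZMod n, toCirc (star (q' (i + 1)) * Dihedral (p i) (p (i + 1)) * q' i) := by
  let u : ZMod n → ℍ := fun i => star (q i) * q' i
  let c : ZMod n → ℍ := fun i => star (q (i + 1)) * Dihedral (p i) (p (i + 1)) * q i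
  let z : ZMod n → ℂ := fun i => toCirc (u i)
  let w : ZMod n → ℂ := fun i => toCirc (c i)
  have hu_norm : ∀ i, ‖u i‖ = 1 := fun i => by
    simp [u, norm_mul, Quaternion.norm_star, hq i, hq' i]
  have hq'eq : ∀ i, q' i = q i * u i := fun i => by
    show q' i = q i * (star (q i) * q' i)
    rw [← mul_assoc, unit_mul_star (q i) (hq i), one_mul]
  have hu_qi : ∀ i, u i * qi * star (u i) = qi := fun i => by
    show star (q i) * q' i * qi * star (star (q i) * q' i) = qi
    rw [star_mul, star_star]
    calc star (q i) * q' i * qi * (star (q' i) * q i)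
        = star (q i) * (q' i * qi * star (q' i)) * q i := by simp only [mul_assoc]
      _ = star (q i) * p i * q i := by rw [hlift' i]
      _ = qi := conj_lift (q i) (p i) (hq i) (hlift i)
  have hu_circ : ∀ i, (u i).imJ = 0 ∧ (u i).imK = 0 := fun i =>
    circ_of_comm _ (comm_qi_of _ (hu_qi i) (hu_norm i))
  have hDn : ∀ i : ZMod n, ‖Dihedral (p i) (p (i + 1))‖ = 1 := fun i =>
    dihedral_norm _ _ (hpim i) (hpim (i + 1)) (hpn i) (hpn (i + 1)) (hna i)
  have hDc : ∀ i : ZMod n,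
      Dihedral (p i) (p (i + 1)) * p i * star (Dihedral (p i) (p (i + 1))) = p (i + 1) :=
    fun i => dihedral_conj _ _ (hpim i) (hpim (i + 1)) (hpn i) (hpn (i + 1)) (hna i)
  have hc_norm : ∀ i, ‖c i‖ = 1 := fun i => by
    simp [c, norm_mul, Quaternion.norm_star, hq i, hq (i + 1), hDn i]
  have hc_qi : ∀ i, c i * qi * star (c i) = qi := fun i => by
    show star (q (i + 1)) * Dihedral (p i) (p (i + 1)) * q i * qi *
      star (star (q (i + 1)) * Dihedral (p i) (p (i + 1)) * q i) = qi
    simp only [star_mul, star_star]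
    calc star (q (i + 1)) * Dihedral (p i) (p (i + 1)) * q i * qi *
          (star (q i) * (star (Dihedral (p i) (p (i + 1))) * q (i + 1)))
        = star (q (i + 1)) * (Dihedral (p i) (p (i + 1)) * (q i * qi * star (q i)) *
            star (Dihedral (p i) (p (i + 1)))) * q (i + 1) := by
          simp only [mul_assoc]
      _ = star (q (i + 1)) * p (i + 1) * q (i + 1) := by rw [hlift i, hDc i]
      _ = qi := conj_lift _ _ (hq (i + 1)) (hlift (i + 1))
  have hc_circ : ∀ i, (c i).imJ = 0 ∧ (c i).imK = 0 := fun i =>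
    circ_of_comm _ (comm_qi_of _ (hc_qi i) (hc_norm i))
  have hdec : ∀ i, toCirc (star (q' (i + 1)) * Dihedral (p i) (p (i + 1)) * q' i)
      = (starRingEnd ℂ) (z (i + 1)) * (w i * z i) := by
    intro i
    have e : star (q' (i + 1)) * Dihedral (p i) (p (i + 1)) * q' i
        = star (u (i + 1)) * (c i * u i) := by
      rw [hq'eq (i + 1), hq'eq i, star_mul]
      show _ = star (u (i + 1)) *
        (star (q (i + 1)) * Dihedral (p i) (p (i + 1)) * q i * u i)
      simp only [mul_assoc]
    have hsu : (star (u (i + 1))).imJ = 0 ∧ (star (u (i + 1))).imK = 0 := by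
      constructor <;> simp [(hu_circ (i + 1)).1, (hu_circ (i + 1)).2]
    rw [e, toCirc_mul _ _ hsu, toCirc_mul _ _ (hc_circ i), toCirc_star]
  have hshift : (∏ i : ZMod n, (starRingEnd ℂ) (z (i + 1))) = ∏ i : ZMod n, (starRingEnd ℂ) (z i) :=
    Fintype.prod_equiv (Equiv.addRight (1 : ZMod n)) _ _ (fun i => rfl)
  have hzz : (∏ i : ZMod n, (starRingEnd ℂ) (z i)) * (∏ i : ZMod n, z i) = 1 := by
    rw [← Finset.prod_mul_distrib,
      Finset.prod_congr rfl (fun i _ => toCirc_conj_mul (u i) (hu_circ i) (hu_norm i))]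
    simp
  symm
  calc (∏ i : ZMod n, toCirc (star (q' (i + 1)) * Dihedral (p i) (p (i + 1)) * q' i))
      = ∏ i : ZMod n, (starRingEnd ℂ) (z (i + 1)) * (w i * z i) :=
        Finset.prod_congr rfl (fun i _ => hdec i)
    _ = (∏ i : ZMod n, (starRingEnd ℂ) (z (i + 1))) *
          ((∏ i : ZMod n, w i) * ∏ i : ZMod n, z i) := by
        rw [Finset.prod_mul_distrib, Finset.prod_mul_distrib]
    _ = ((∏ i : ZMod n, (starRingEnd ℂ) (z i)) * (∏ i : ZMod n, z i)) * ∏ i : ZMod n, w i := by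
        rw [hshift]; ring
    _ = ∏ i : ZMod n, w i := by rw [hzz, one_mul]
    _ = _ := rfl
end
end

section
/- Let n ≥ 1 and let p₀, …, p_{n−1} be purely imaginary unit quaternions with p_{i+1} ≠ −p_i for 0 ≤ i ≤ n−2 and p₀ ≠ −p_{n−1}. Let R := Dihedral(p_{n−1},p₀) * Dihedral(p_{n−2},p_{n−1}) * ⋯ * Dihedral(p₀,p₁) be the ordered product of the dihedral quaternions along the closed polygon. Then R * p₀ * conj R = p₀; consequently, for every unit quaternion q₀ with q₀ * 𝕚 * conj q₀ = p₀, the quaternion conj(q₀) * R * q₀ has norm 1 and vanishing 𝕛- and 𝕜-components, i.e., it lies in the circle subgroup {a + b•𝕚 : a² + b² = 1}. (Hence the holonomy angle 2·arg(conj(q₀) * R * q₀) in the horizontal-lift area formula is well defined.) -/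
open Quaternion

noncomputable section

lemma star_of_im (p : ℍ) (h : p.re = 0) : star p = -p := by
  ext <;> simp [h]

lemma sq_of_im_unit (p : ℍ) (h : p.re = 0) (hn : ‖p‖ = 1) : p * p = -1 := by
  have hs : star p = -p := star_of_im p h
  have h2 : p * star p = ((normSq p : ℝ) : ℍ) := Quaternion.self_mul_star p
  have h3 : normSq p = 1 := by
    rw [Quaternion.normSq_eq_norm_mul_self, hn]; ring
  rw [hs, mul_neg, h3] at h2
  simpa using congrArg Neg.neg h2

lemma dihedral_ne (p p' : ℍ) (hp : p.re = 0) (hp' : p'.re = 0) (hnp : ‖p‖ = 1)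
    (hnp' : ‖p'‖ = 1) (hne : p' ≠ -p) : (1 : ℍ) - p' * p ≠ 0 := by
  intro h
  have h1 : (1 : ℍ) = p' * p := sub_eq_zero.mp h
  have h2 : p' * (p * p) = p := by
    calc p' * (p * p) = (p' * p) * p := by noncomm_ring
      _ = p := by rw [← h1, one_mul]
  rw [sq_of_im_unit p hp hnp] at h2
  apply hne
  rw [← h2]; simp

lemma dihedral_conj_s10 (p p' : ℍ) (hp : p.re = 0) (hp' : p'.re = 0) (hnp : ‖p‖ = 1)
    (hnp' : ‖p'‖ = 1) (hne : p' ≠ -p) :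
    Dihedral p p' * p * star (Dihedral p p') = p' ∧ ‖Dihedral p p'‖ = 1 := by
  set u : ℍ := (1 : ℍ) - p' * p with hu
  have hu0 : u ≠ 0 := dihedral_ne p p' hp hp' hnp hnp' hne
  have hr0 : ‖u‖ ≠ 0 := norm_ne_zero_iff.mpr hu0
  have hstaru : star u = 1 - p * p' := by
    rw [hu, star_sub, star_mul, star_of_im p hp, star_of_im p' hp']
    simp
  have key : u * p * star u = u * star u * p' := by
    have h1 : p * (1 - p * p') = p + p' := by
      have : p * (1 - p * p') = p - (p * p) * p' := by noncomm_ring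
      rw [this, sq_of_im_unit p hp hnp]; noncomm_ring
    have h2 : (1 - p * p') * p' = p + p' := by
      have : (1 - p * p') * p' = p' - p * (p' * p') := by noncomm_ring
      rw [this, sq_of_im_unit p' hp' hnp']; noncomm_ring
    rw [hstaru, mul_assoc, h1, mul_assoc, h2]
  have hd : Dihedral p p' = ‖u‖⁻¹ • u := by
    rw [Dihedral, ← hu, div_eq_mul_inv, ← Quaternion.coe_inv, Quaternion.mul_coe_eq_smul]
  constructor
  · have hstar : star (Dihedral p p') = ‖u‖⁻¹ • star u := by
      rw [hd, Quaternion.star_smul]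
    have hns : u * star u = ((normSq u : ℝ) : ℍ) := Quaternion.self_mul_star u
    rw [hd, Quaternion.star_smul, smul_mul_assoc, smul_mul_assoc, mul_smul_comm, smul_smul,
      key, hns,
      Quaternion.coe_mul_eq_smul, smul_smul, Quaternion.normSq_eq_norm_mul_self]
    have : ‖u‖⁻¹ * ‖u‖⁻¹ * (‖u‖ * ‖u‖) = 1 := by field_simp
    rw [this, one_smul]
  · rw [Dihedral, norm_div, Quaternion.norm_coe, norm_norm, div_self hr0]

open Fin.NatCast

theorem stmt_10 (n : ℕ) [NeZero n] (p : Fin n → ℍ)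
    (hpim : ∀ i, (p i).re = 0) (hpn : ∀ i, ‖p i‖ = 1)
    (hna : ∀ i : Fin n, p (i + 1) ≠ -p i)
    (R : ℍ)
    (hR : R = (List.ofFn (fun i : Fin n => Dihedral (p i) (p (i + 1)))).reverse.prod) :
    R * p 0 * star R = p 0 ∧
    ∀ q₀ : ℍ, ‖q₀‖ = 1 → q₀ * qi * star q₀ = p 0 →
      ‖star q₀ * R * q₀‖ = 1 ∧ (star q₀ * R * q₀).imJ = 0 ∧ (star q₀ * R * q₀).imK = 0 := by
  -- main induction over ℕ
  have key : ∀ k : ℕ,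
      (((List.range k).map (fun i : ℕ => Dihedral (p i) (p ((i : Fin n) + 1)))).reverse.prod)
        * p 0 * star (((List.range k).map
          (fun i : ℕ => Dihedral (p i) (p ((i : Fin n) + 1)))).reverse.prod) = p (k : Fin n) ∧
      ‖(((List.range k).map (fun i : ℕ => Dihedral (p i) (p ((i : Fin n) + 1)))).reverse.prod)‖ = 1 := by
    intro k
    induction k with
    | zero => simp
    | succ k ih =>
      obtain ⟨ih1, ih2⟩ := ih
      rw [List.range_succ, List.map_append, List.reverse_append]
      simp only [List.map_cons, List.map_nil, List.reverse_cons, List.reverse_nil,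
        List.nil_append, List.singleton_append, List.prod_cons]
      set Rk := ((List.range k).map (fun i : ℕ => Dihedral (p i) (p ((i : Fin n) + 1)))).reverse.prod
      set d := Dihedral (p (k : Fin n)) (p ((k : Fin n) + 1))
      obtain ⟨hd1, hd2⟩ := dihedral_conj_s10 (p (k : Fin n)) (p ((k : Fin n) + 1))
        (hpim _) (hpim _) (hpn _) (hpn _) (hna _)
      constructor
      · have : d * Rk * p 0 * star (d * Rk) = d * (Rk * p 0 * star Rk) * star d := by
          rw [star_mul]; noncomm_ring
        rw [this, ih1, hd1]
        congr 1
        push_cast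
        ring
      · rw [norm_mul, hd2, ih2, one_mul]
  -- identify R with the ℕ-indexed product
  have hlist : (List.ofFn (fun i : Fin n => Dihedral (p i) (p (i + 1)))) =
      (List.range n).map (fun i : ℕ => Dihedral (p i) (p ((i : Fin n) + 1))) := by
    rw [List.ofFn_eq_map, ← (show (List.finRange n).map Fin.val = List.range n from List.ext_getElem (by simp) (by simp)), List.map_map]
    apply List.map_congr_left
    intro j _
    simp [Fin.cast_val_eq_self]
  have hRp : R * p 0 * star R = p 0 := by
    rw [hR, hlist]
    have := (key n).1
    simpa using this
  have hRn : ‖R‖ = 1 := by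
    rw [hR, hlist]; exact (key n).2
  refine ⟨hRp, fun q₀ hq hqp => ?_⟩
  set x := star q₀ * R * q₀ with hx
  have hq2 : star q₀ * q₀ = 1 := by
    rw [Quaternion.star_mul_self, Quaternion.normSq_eq_norm_mul_self, hq]
    norm_num
  have hq2' : q₀ * star q₀ = 1 := by
    rw [Quaternion.self_mul_star, Quaternion.normSq_eq_norm_mul_self, hq]
    norm_num
  have hxn : ‖x‖ = 1 := by
    rw [hx, norm_mul, norm_mul, Quaternion.norm_star, hq, hRn]; ring
  have hcomm : x * qi = qi * x := by
    have h1 : x * qi * star x = qi := by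
      have hstarx : star x = star q₀ * star R * q₀ := by
        rw [hx, star_mul, star_mul, star_star]; noncomm_ring
      have hqi : qi = star q₀ * p 0 * q₀ := by
        rw [← hqp]
        calc qi = (star q₀ * q₀) * qi * (star q₀ * q₀) := by rw [hq2]; noncomm_ring
          _ = star q₀ * (q₀ * qi * star q₀) * q₀ := by noncomm_ring
      calc x * qi * star x
          = star q₀ * (R * (q₀ * qi * star q₀) * star R) * q₀ := by
            rw [hx, hstarx]; noncomm_ring
        _ = star q₀ * (R * p 0 * star R) * q₀ := by rw [hqp]
        _ = star q₀ * p 0 * q₀ := by rw [hRp]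
        _ = qi := hqi.symm
    have hxx : star x * x = 1 := by
      rw [Quaternion.star_mul_self, Quaternion.normSq_eq_norm_mul_self, hxn]
      norm_num
    calc x * qi = x * qi * (star x * x) := by rw [hxx, mul_one]
      _ = (x * qi * star x) * x := by noncomm_ring
      _ = qi * x := by rw [h1]
  refine ⟨hxn, ?_, ?_⟩
  · have h := congrArg QuaternionAlgebra.imK hcomm
    rw [Quaternion.imK_mul x qi, Quaternion.imK_mul qi x] at h; simp [qi] at h
    linarith
  · have h := congrArg QuaternionAlgebra.imJ hcomm
    rw [Quaternion.imJ_mul x qi, Quaternion.imJ_mul qi x] at h; simp [qi] at h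
    linarith
end
end

section
/- Let q be a unit quaternion and let X, Y ∈ ℍ satisfy Re(conj q * X) = 0 and Re(conj q * Y) = 0 (i.e., X and Y are tangent to the unit sphere S³ at q). Set p := q * 𝕚 * conj q, U := X * 𝕚 * conj q + q * 𝕚 * conj X, and W := Y * 𝕚 * conj q + q * 𝕚 * conj Y (so U, W are the images of X, Y under the differential of the Hopf map). Then 2·Re(𝕚 * (conj X * Y − conj Y * X)) = −(1/2)·Re(p * (U*W − W*U)). (This is the pointwise form of dα = π*σ: the exterior derivative of the 1-form α = 2Re(𝕚 conj(q) dq) equals the pullback under the Hopf map of the standard area form σ of S², where σ_p(u,w) = ⟨p, u×w⟩ = −(1/2)Re(p(uw − wu)). Hence (S³, α) is a prequantum bundle over (S², σ).) -/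
open Quaternion

noncomputable section

theorem stmt_11 (q X Y : ℍ) (hq : ‖q‖ = 1)
    (hX : (star q * X).re = 0) (hY : (star q * Y).re = 0)
    (p U W : ℍ)
    (hp : p = q * qi * star q)
    (hU : U = X * qi * star q + q * qi * star X)
    (hW : W = Y * qi * star q + q * qi * star Y) :
    2 * (qi * (star X * Y - star Y * X)).re =
      -(1 / 2 : ℝ) * (p * (U * W - W * U)).re := by
  have hqire : qi.re = 0 := rfl
  have hqiI : qi.imI = 1 := rfl
  have hqiJ : qi.imJ = 0 := rfl
  have hqiK : qi.imK = 0 := rfl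
  have hq' : q.re^2 + q.imI^2 + q.imJ^2 + q.imK^2 = 1 := by
    have h := Quaternion.normSq_eq_norm_mul_self (a := q)
    rw [hq, Quaternion.normSq_def'] at h
    nlinarith [h]
  subst hp hU hW
  simp only [Quaternion.re_mul, Quaternion.imI_mul, Quaternion.imJ_mul, Quaternion.imK_mul,
    Quaternion.re_star, Quaternion.imI_star, Quaternion.imJ_star, Quaternion.imK_star,
    Quaternion.re_add, Quaternion.imI_add, Quaternion.imJ_add, Quaternion.imK_add,
    Quaternion.re_sub, Quaternion.imI_sub, Quaternion.imJ_sub, Quaternion.imK_sub,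
    hqire, hqiI, hqiJ, hqiK] at hX hY ⊢
  linear_combination ((-4:ℝ)*q.imK*Y.imJ + (4:ℝ)*q.imJ*q.imK*q.imK*Y.imK + (4:ℝ)*q.imJ*q.imJ*q.imJ*Y.imK + (4:ℝ)*q.imI*q.imK*q.imK*Y.re + (4:ℝ)*q.imI*q.imJ*q.imJ*Y.re + (4:ℝ)*q.imI*q.imI*q.imJ*Y.imK + (4:ℝ)*q.imI*q.imI*q.imI*Y.re + (-4:ℝ)*q.re*q.imK*q.imK*Y.imI + (-4:ℝ)*q.re*q.imJ*q.imJ*Y.imI + (-4:ℝ)*q.re*q.imI*q.imK*Y.imK + (-4:ℝ)*q.re*q.imI*q.imJ*Y.imJ + (-8:ℝ)*q.re*q.imI*q.imI*Y.imI + (4:ℝ)*q.re*q.re*q.imJ*Y.imK + (-4:ℝ)*q.re*q.re*q.re*Y.imI) * hX + ((4:ℝ)*q.imK*q.imK*q.imK*X.imJ + (-4:ℝ)*q.imJ*q.imK*q.imK*X.imK + (4:ℝ)*q.imJ*q.imJ*q.imK*X.imJ + (-4:ℝ)*q.imJ*q.imJ*q.imJ*X.imK + (-4:ℝ)*q.imI*q.imK*q.imK*X.re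 + (-4:ℝ)*q.imI*q.imJ*q.imJ*X.re + (4:ℝ)*q.imI*q.imI*q.imK*X.imJ + (-4:ℝ)*q.imI*q.imI*q.imJ*X.imK + (-4:ℝ)*q.imI*q.imI*q.imI*X.re + (4:ℝ)*q.re*X.imI + (4:ℝ)*q.re*q.imI*q.imK*X.imK + (4:ℝ)*q.re*q.imI*q.imJ*X.imJ + (4:ℝ)*q.re*q.imI*q.imI*X.imI + (4:ℝ)*q.re*q.re*q.imK*X.imJ + (-4:ℝ)*q.re*q.re*q.imJ*X.imK) * hY + ((4:ℝ)*X.imK*Y.imJ + (-4:ℝ)*X.imJ*Y.imK + (-4:ℝ)*X.imI*Y.re + (4:ℝ)*X.re*Y.imI + (-4:ℝ)*q.imK*q.imK*X.imJ*Y.imK + (-4:ℝ)*q.imK*q.imK*X.imI*Y.re + (4:ℝ)*q.imK*q.imK*X.re*Y.imI + (-4:ℝ)*q.imJ*q.imK*X.imJ*Y.imJ + (4:ℝ)*q.imJ*q.imJ*X.imK*Y.imJ + (-4:ℝ)*q.imJ*q.imJ*X.imJ*Y.imK + (-4:ℝ)*q.imJ*q.imJ*X.imI*Y.re + (4:ℝ)*q.imJ*q.imJ*X.re*Y.imI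 + (-4:ℝ)*q.imI*q.imK*X.imI*Y.imJ + (4:ℝ)*q.imI*q.imI*X.imK*Y.imJ + (-4:ℝ)*q.imI*q.imI*X.imJ*Y.imK + (-4:ℝ)*q.imI*q.imI*X.imI*Y.re + (4:ℝ)*q.imI*q.imI*X.re*Y.imI + (4:ℝ)*q.re*q.imK*X.imI*Y.imK + (-4:ℝ)*q.re*q.imK*X.re*Y.imJ + (4:ℝ)*q.re*q.imJ*X.imI*Y.imJ + (4:ℝ)*q.re*q.imI*X.imI*Y.imI + (4:ℝ)*q.re*q.re*X.imK*Y.imJ + (-4:ℝ)*q.re*q.re*X.imJ*Y.imK + (4:ℝ)*q.re*q.re*X.re*Y.imI) * hq'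
end
end

section
/- The 1-form α(X) = 2Re(𝕚 * conj q * X) on the unit quaternions is invariant under the right circle action and normalized on vertical vectors: for every unit quaternion q, every θ ∈ ℝ with z := cos θ + (sin θ)•𝕚, and every X ∈ ℍ, one has Re(𝕚 * conj(q * z) * (X * z)) = Re(𝕚 * conj q * X); moreover the velocity at θ = 0 of the fiber curve θ ↦ q * (cos θ − (sin θ)•𝕚) is −q*𝕚 and α(−q*𝕚) = 2. (Hence α/2 is a principal connection 1-form for the Hopf fibration.) -/
open Quaternion

noncomputable section

theorem stmt_13 (q : ℍ) (hq : ‖q‖ = 1) :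
    (∀ (θ : ℝ) (X : ℍ),
        (qi * star (q * (((Real.cos θ : ℝ) : ℍ) + Real.sin θ • qi)) *
          (X * (((Real.cos θ : ℝ) : ℍ) + Real.sin θ • qi))).re =
        (qi * star q * X).re) ∧
    HasDerivAt (fun θ : ℝ => q * (((Real.cos θ : ℝ) : ℍ) - Real.sin θ • qi))
      (-(q * qi)) 0 ∧
    2 * (qi * star q * (-(q * qi))).re = 2 := by
  refine ⟨?_, ?_, ?_⟩
  · intro θ X
    have h : Real.cos θ^2 + Real.sin θ^2 = 1 := by
      nlinarith [Real.sin_sq_add_cos_sq θ]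
    simp [Quaternion.re_mul, Quaternion.imI_mul, Quaternion.imJ_mul, Quaternion.imK_mul, Quaternion.re_coe, Quaternion.imI_coe, Quaternion.imJ_coe, Quaternion.imK_coe, Quaternion.ext_iff]; simp [qi]
    linear_combination (q.imI*X.re - q.re*X.imI + q.imJ*X.imK - q.imK*X.imJ) * h
  · have h1 : HasDerivAt (fun θ : ℝ => (((Real.cos θ : ℝ) : ℍ) - Real.sin θ • qi)) (-qi) 0 := by
      have hc : HasDerivAt (fun θ : ℝ => ((Real.cos θ : ℝ) : ℍ)) ((0:ℝ) • (1:ℍ)) 0 := by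
        have := (Real.hasDerivAt_cos 0).smul_const (1:ℍ)
        have heq : (fun θ : ℝ => ((Real.cos θ : ℝ) : ℍ)) = fun θ : ℝ => Real.cos θ • (1:ℍ) := by
          funext θ; simp [Quaternion.ext_iff, qi]
        rw [heq]; simpa using this
      have hs : HasDerivAt (fun θ : ℝ => Real.sin θ • qi) ((1:ℝ) • qi) 0 := by
        simpa using (Real.hasDerivAt_sin 0).smul_const qi
      exact (hc.sub hs).congr_deriv (by simp)
    simpa using h1.const_mul q
  · have h : q.re^2 + q.imI^2 + q.imJ^2 + q.imK^2 = 1 := by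
      have := Quaternion.normSq_eq_norm_mul_self (a := q)
      rw [hq] at this
      simp [Quaternion.normSq_def'] at this
      nlinarith [this]
    simp [Quaternion.re_mul, Quaternion.imI_mul, Quaternion.imJ_mul, Quaternion.imK_mul, Quaternion.re_coe, Quaternion.imI_coe, Quaternion.imJ_coe, Quaternion.imK_coe]; simp [qi]
    nlinarith [h]
end
end

section
/- For every unit quaternion q, the 3×3 real matrix π₁(q) whose columns are the coordinate vectors (with respect to the basis 𝕚, 𝕛, 𝕜 of the purely imaginary quaternions) of q*𝕚*conj q, q*𝕛*conj q, and q*𝕜*conj q is a special orthogonal matrix: (π₁(q))ᵀ · π₁(q) = 1 and det(π₁(q)) = 1. Moreover the first column of π₁(q) is the coordinate vector of the Hopf image π(q) = q*𝕚*conj q; that is, the Hopf fibration factors as π = π₂ ∘ π₁, where π₂ : SO(3) → S² extracts the first column. -/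
open Quaternion Matrix

noncomputable section

/-- The imaginary unit `𝕛` of the quaternions. -/
def qj : ℍ := ⟨0, 0, 1, 0⟩

/-- The imaginary unit `𝕜` of the quaternions. -/
def qk : ℍ := ⟨0, 0, 0, 1⟩

/-- The coordinate vector of a purely imaginary quaternion with respect to the
basis `𝕚, 𝕛, 𝕜`. -/
def coords (x : ℍ) : Fin 3 → ℝ := ![x.imI, x.imJ, x.imK]

/-- `π₁ : S³ → SO(3)`: the matrix whose columns are the coordinate vectors of
`q*𝕚*conj q`, `q*𝕛*conj q`, `q*𝕜*conj q`. -/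
def pi1 (q : ℍ) : Matrix (Fin 3) (Fin 3) ℝ :=
  Matrix.of fun i j => coords (q * (![qi, qj, qk] j) * star q) i

/-! The map `x ↦ q * x * star q` multiplies real parts and products by `normSq q`. For purely
imaginary `u, v, w` the dot product of coordinate vectors is `-re (u * v)` and the determinant
with columns `u, v, w` is `-re (u * v * w)`. Hence `re (eₐ * e_b) = -δₐ_b` gives
`π₁(q)ᵀ π₁(q) = (normSq q)² • 1`, and `𝕚 * 𝕛 * 𝕜 = -1` gives `det π₁(q) = (normSq q)³`. -/

namespace Quaternion

theorem re_mul_mul_star (q a : ℍ) : (q * a * star q).re = normSq q * a.re := by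
  simp only [re_mul, re_star, imI_mul, imJ_mul, imK_mul, imI_star, imJ_star, imK_star,
    normSq_def']
  ring

theorem mul_mul_star_mul_mul_mul_star (q a b : ℍ) :
    (q * a * star q) * (q * b * star q) = normSq q • (q * (a * b) * star q) := by
  calc (q * a * star q) * (q * b * star q) = q * a * (star q * q) * b * star q := by
        simp only [mul_assoc]
    _ = normSq q • (q * (a * b) * star q) := by
        rw [star_mul_self, mul_coe_eq_smul]
        simp only [smul_mul_assoc, mul_assoc]

end Quaternion

open Quaternion

theorem coords_dotProduct (x y : ℍ) : coords x ⬝ᵥ coords y = x.re * y.re - (x * y).re := by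
  simp only [coords, dotProduct, Fin.sum_univ_three, re_mul, cons_val_zero, cons_val_one,
    cons_val_two, tail_cons, head_cons]
  ring

theorem det_of_coords (v : Fin 3 → ℍ) (hv : ∀ j, (v j).re = 0) :
    (Matrix.of fun i j => coords (v j) i).det = -(v 0 * v 1 * v 2).re := by
  simp only [det_fin_three, of_apply, coords, re_mul, imI_mul, imJ_mul, imK_mul, hv,
    cons_val_zero, cons_val_one, cons_val_two, tail_cons, head_cons]
  ring

theorem transpose_mul_self_of_coords (v : Fin 3 → ℍ) (hv : ∀ j, (v j).re = 0) :
    (Matrix.of fun i j => coords (v j) i)ᵀ * (Matrix.of fun i j => coords (v j) i) =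
      Matrix.of fun i j => -(v i * v j).re := by
  ext i j
  calc _ = coords (v i) ⬝ᵥ coords (v j) := rfl
    _ = _ := by rw [coords_dotProduct, hv, zero_mul, zero_sub, of_apply]

theorem re_basis_mul_basis (i j : Fin 3) :
    (![qi, qj, qk] i * ![qi, qj, qk] j).re = -(1 : Matrix (Fin 3) (Fin 3) ℝ) i j := by
  fin_cases i <;> fin_cases j <;> simp only [re_mul] <;> simp [qi, qj, qk, one_apply]

theorem qi_mul_qj_mul_qk : qi * qj * qk = -1 := by
  ext <;> simp only [re_mul, imI_mul, imJ_mul, imK_mul] <;> simp [qi, qj, qk]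

theorem re_mul_basis_mul_star (q : ℍ) (j : Fin 3) : (q * ![qi, qj, qk] j * star q).re = 0 := by
  rw [re_mul_mul_star]
  fin_cases j <;> simp [qi, qj, qk]

theorem transpose_pi1_mul_pi1 (q : ℍ) : (pi1 q)ᵀ * pi1 q = (normSq q ^ 2) • 1 := by
  rw [pi1, transpose_mul_self_of_coords _ (re_mul_basis_mul_star q)]
  ext i j
  simp only [of_apply, mul_mul_star_mul_mul_mul_star, re_smul, re_mul_mul_star,
    re_basis_mul_basis, Matrix.smul_apply, smul_eq_mul]
  ring

theorem det_pi1 (q : ℍ) : (pi1 q).det = normSq q ^ 3 := by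
  rw [pi1, det_of_coords _ (re_mul_basis_mul_star q)]
  simp only [cons_val_zero, cons_val_one, cons_val_two, tail_cons, head_cons]
  rw [mul_mul_star_mul_mul_mul_star, smul_mul_assoc, mul_mul_star_mul_mul_mul_star, smul_smul,
    qi_mul_qj_mul_qk, re_smul, re_mul_mul_star, re_neg, re_one, smul_eq_mul]
  ring

theorem stmt_14 (q : ℍ) (hq : ‖q‖ = 1) :
    (pi1 q)ᵀ * pi1 q = 1 ∧ (pi1 q).det = 1 ∧
    (∀ i : Fin 3, pi1 q i 0 = coords (q * qi * star q) i) := by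
  have hq' : normSq q = 1 := by rw [normSq_eq_norm_mul_self, hq, one_mul]
  refine ⟨?_, ?_, fun i => rfl⟩
  · rw [transpose_pi1_mul_pi1, hq', one_pow, one_smul]
  · rw [det_pi1, hq', one_pow]
end
end

section
/- Define a global lift ℓ of the Hopf fibration as follows: for a purely imaginary unit quaternion p, set ℓ(p) := Dihedral(𝕚, p) if the 𝕚-component of p is ≥ 0, and ℓ(p) := Dihedral(−𝕚, p) * 𝕛 otherwise. Then for every purely imaginary unit quaternion p, ℓ(p) is a unit quaternion and ℓ(p) * 𝕚 * conj(ℓ(p)) = p. (In particular the Hopf map from unit quaternions onto the unit sphere of purely imaginary quaternions is surjective, and this lift avoids the antipodal degeneracy of the dihedral.) -/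
open Quaternion

noncomputable section

/-- The global lift of the Hopf fibration avoiding the antipodal degeneracy. -/
def lift (p : ℍ) : ℍ :=
  if 0 ≤ p.imI then Dihedral qi p else Dihedral (-qi) p * qj

@[simp] lemma qi_re : qi.re = 0 := rfl
@[simp] lemma qi_imI : qi.imI = 1 := rfl
@[simp] lemma qi_imJ : qi.imJ = 0 := rfl
@[simp] lemma qi_imK : qi.imK = 0 := rfl
@[simp] lemma qj_re : qj.re = 0 := rfl
@[simp] lemma qj_imI : qj.imI = 0 := rfl
@[simp] lemma qj_imJ : qj.imJ = 1 := rfl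
@[simp] lemma qj_imK : qj.imK = 0 := rfl
lemma key1 (p : ℍ) (hp : p.re = 0) (habc : p.imI^2 + p.imJ^2 + p.imK^2 = 1) :
    ((1 : ℍ) - p * qi) * qi * star ((1 : ℍ) - p * qi) = (2 + 2 * p.imI) • p := by
  rw [← Quaternion.coe_mul_eq_smul]
  ext <;> simp [hp, Quaternion.coe_mul_eq_smul] <;> ring_nf <;>
    first | linear_combination habc | linear_combination 2*habc | linear_combination -habc

lemma key2 (p : ℍ) (hp : p.re = 0) (habc : p.imI^2 + p.imJ^2 + p.imK^2 = 1) :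
    (((1 : ℍ) - p * (-qi)) * qj) * qi * star (((1 : ℍ) - p * (-qi)) * qj)
      = (2 - 2 * p.imI) • p := by
  rw [← Quaternion.coe_mul_eq_smul]
  ext <;> simp [hp, Quaternion.coe_mul_eq_smul] <;> ring_nf <;>
    first | linear_combination habc | linear_combination 2*habc | linear_combination -habc

lemma sandwich (x : ℍ) (r : ℝ) :
    (r • x) * qi * star (r • x) = (r * r) • (x * qi * star x) := by
  rw [Quaternion.star_smul, smul_mul_assoc, smul_mul_assoc, mul_smul_comm, smul_smul]

theorem stmt_15 (p : ℍ) (hp : p.re = 0) (hpn : ‖p‖ = 1) :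
    ‖lift p‖ = 1 ∧ lift p * qi * star (lift p) = p := by
  have h1 : normSq p = 1 := by rw [Quaternion.normSq_eq_norm_mul_self, hpn]; ring
  have habc : p.imI^2 + p.imJ^2 + p.imK^2 = 1 := by
    rw [Quaternion.normSq_def', hp] at h1; linarith
  have hqj : ‖qj‖ = 1 := by
    have h2 : normSq qj = 1 := by simp [Quaternion.normSq_def']
    rw [Quaternion.normSq_eq_norm_mul_self] at h2
    nlinarith [norm_nonneg qj]
  unfold lift
  split_ifs with h
  · set q : ℍ := (1 : ℍ) - p * qi with hqdef
    have hq2 : normSq q = 2 + 2 * p.imI := by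
      simp [hqdef, Quaternion.normSq_def', hp]; ring_nf; linear_combination habc
    have hr2 : ‖q‖ * ‖q‖ = 2 + 2 * p.imI := by rw [← Quaternion.normSq_eq_norm_mul_self, hq2]
    have hrpos : (0 : ℝ) < ‖q‖ := by nlinarith [norm_nonneg q, h]
    have hD : Dihedral qi p = (‖q‖⁻¹ : ℝ) • q := by
      rw [Dihedral, div_eq_mul_inv, ← Quaternion.coe_inv, Quaternion.mul_coe_eq_smul]
    constructor
    · rw [hD, norm_smul, Real.norm_eq_abs, abs_of_pos (inv_pos.mpr hrpos),
        inv_mul_cancel₀ hrpos.ne']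
    · rw [hD, sandwich, key1 p hp habc, smul_smul]
      rw [show ‖q‖⁻¹ * ‖q‖⁻¹ * (2 + 2 * p.imI) = 1 by field_simp [← hr2]; linear_combination -hr2, one_smul]
  · set q : ℍ := (1 : ℍ) - p * (-qi) with hqdef
    have hq2 : normSq q = 2 - 2 * p.imI := by
      simp [hqdef, Quaternion.normSq_def', hp]; ring_nf; linear_combination habc
    have hr2 : ‖q‖ * ‖q‖ = 2 - 2 * p.imI := by rw [← Quaternion.normSq_eq_norm_mul_self, hq2]
    push_neg at h
    have hrpos : (0 : ℝ) < ‖q‖ := by nlinarith [norm_nonneg q, h]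
    have hD : Dihedral (-qi) p = (‖q‖⁻¹ : ℝ) • q := by
      rw [Dihedral, div_eq_mul_inv, ← Quaternion.coe_inv, Quaternion.mul_coe_eq_smul]
    constructor
    · rw [hD, smul_mul_assoc, norm_smul, norm_mul, hqj, mul_one, Real.norm_eq_abs,
        abs_of_pos (inv_pos.mpr hrpos), inv_mul_cancel₀ hrpos.ne']
    · rw [hD, smul_mul_assoc, sandwich, key2 p hp habc, smul_smul]
      rw [show ‖q‖⁻¹ * ‖q‖⁻¹ * (2 - 2 * p.imI) = 1 by field_simp [← hr2]; linear_combination -hr2, one_smul]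
end
end

section
/- For every special orthogonal matrix M ∈ SO(3) (i.e., MᵀM = 1 and det M = 1) and all vectors ω, ν ∈ ℝ³, one has ⟨M·e₁, (M·(ω × e₁)) × (M·(ν × e₁))⟩ = ω₂ν₃ − ω₃ν₂ = ⟨e₁, ω × ν⟩, where e₁ = (1,0,0) and × is the cross product in ℝ³. (This is the pointwise identity, evaluated on left-invariant vector fields generated by skew-symmetric matrices with axis vectors ω and ν, showing that the pullback under π₂ : SO(3) → S², P ↦ first column of P, of the standard spherical area form σ_p(u,w) = ⟨p, u×w⟩ equals the exterior derivative of the 1-form η on SO(3) given by η|_P(PW) = −ω₁; hence (SO(3), η) is a prequantum bundle over (S², σ).) -/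
open Matrix

noncomputable section

theorem stmt_17 (M : Matrix (Fin 3) (Fin 3) ℝ)
    (hM : Mᵀ * M = 1) (hdet : M.det = 1) (ω ν : Fin 3 → ℝ) :
    (M.mulVec ![1, 0, 0]) ⬝ᵥ
        ((M.mulVec (ω ⨯₃ ![1, 0, 0])) ⨯₃ (M.mulVec (ν ⨯₃ ![1, 0, 0]))) =
      ω 1 * ν 2 - ω 2 * ν 1 ∧
    (![1, 0, 0] : Fin 3 → ℝ) ⬝ᵥ (ω ⨯₃ ν) = ω 1 * ν 2 - ω 2 * ν 1 := by
  have hd := hdet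
  rw [Matrix.det_fin_three] at hd
  constructor
  · simp only [cross_apply, Matrix.mulVec, dotProduct, Fin.sum_univ_three,
      Matrix.cons_val_zero, Matrix.cons_val_one, Matrix.head_cons,
      Matrix.cons_val_two, Matrix.tail_cons]
    ring_nf
    linear_combination (ω 1 * ν 2 - ω 2 * ν 1) * hd
  · simp [cross_apply, dotProduct, Fin.sum_univ_three]
end
end
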